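/- arXiv:2201.12303 — 10 statements merged into one kernel-verified Lean document; each statement's English description precedes it below -/
import Mathlib

section
/- For every number of topics t ≥ 1 there exist a number of voters n ≥ 1 and a voter matrix V : Fin n → Fin t → Bool in which every column has majority Y, such that every proposal that is supported by a majority of voters has at most ⌈(t+1)/2⌉ entries equal to true. (Consequently md_t ≤ ⌈(t+1)/2⌉, where md_t is the minimum over voter matrices of the maximum number of majority decisions achievable by a majority-supported proposal.) -/
/-!
Take `2t + 1` voters: the `t` unit vectors, the zero vector and `t` copies of the all-Y vector.
Every column then has `t + 1` Y's. A voter with at most one Y agrees with a proposal having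
`k` Y's on at most `t - k + 1` topics, which is less than `t / 2` once `2k ≥ t + 3`; so such a
proposal is supported only by the `t` all-Y voters, a minority.
-/

open Finset

/-- Number of topics on which opinion vector `v` agrees with proposal `p`. -/
def agreeCount {t : ℕ} (v p : Fin t → Bool) : ℕ :=
  (univ.filter (fun j => v j = p j)).card

/-- Voter `v` supports proposal `p`: agreement on at least half the topics,
    i.e. `2 * |{j : v j = p j}| ≥ t`. -/
def Supports {t : ℕ} (v p : Fin t → Bool) : Prop :=
  t ≤ 2 * agreeCount v p

instance {t : ℕ} (v p : Fin t → Bool) : Decidable (Supports v p) :=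
  Nat.decLe _ _

/-- Proposal `p` is supported by a majority of the voters of `V`:
    `2 * |{i : voter i supports p}| ≥ n`. -/
def MajSupported {n t : ℕ} (V : Fin n → Fin t → Bool) (p : Fin t → Bool) : Prop :=
  n ≤ 2 * (univ.filter (fun i => Supports (V i) p)).card

/-- Column `j` of `V` has majority Y: `2 * |{i : V i j = true}| ≥ n`. -/
def ColMajority {n t : ℕ} (V : Fin n → Fin t → Bool) (j : Fin t) : Prop :=
  n ≤ 2 * (univ.filter (fun i => V i j = true)).card

/-- Number of true entries of a vector. -/
def trueCount {t : ℕ} (p : Fin t → Bool) : ℕ :=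
  (univ.filter (fun j => p j = true)).card

/-- Number of matching opinions between the voters of `V` and proposal `p`. -/
def matchCount {n t : ℕ} (V : Fin n → Fin t → Bool) (p : Fin t → Bool) : ℕ :=
  (univ.filter (fun ij : Fin n × Fin t => V ij.1 ij.2 = p ij.2)).card

theorem agreeCount_add_trueCount_le {t : ℕ} (v p : Fin t → Bool) :
    agreeCount v p + trueCount p ≤ t + trueCount v := by
  have hagree : univ.filter (fun j => v j = p j) ⊆
      univ.filter (fun j => ¬ p j = true) ∪ univ.filter (fun j => v j = true) := by
    intro j
    cases hp : p j <;> simp_all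
  have hsplit := card_filter_add_card_filter_not (s := (univ : Finset (Fin t))) (fun j => p j = true)
  have hcover := (card_le_card hagree).trans (card_union_le _ _)
  rw [card_univ, Fintype.card_fin] at hsplit
  unfold agreeCount trueCount
  omega

theorem not_supports_of_trueCount_le_one {t : ℕ} {v p : Fin t → Bool} (hv : trueCount v ≤ 1)
    (hp : t + 3 ≤ 2 * trueCount p) : ¬ Supports v p := by
  have := agreeCount_add_trueCount_le v p
  unfold Supports
  omega

/-- Voter `i < t` is the `i`-th unit vector, voter `t` the zero vector, voters `i > t` all-Y. -/
def witnessMatrix (t : ℕ) : Fin (2 * t + 1) → Fin t → Bool :=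
  fun i j => decide (i.val = j.val ∨ t < i.val)

namespace witnessMatrix

variable {t : ℕ}

theorem trueCount_le_one {i : Fin (2 * t + 1)} (hi : i.val ≤ t) :
    trueCount (witnessMatrix t i) ≤ 1 := by
  refine card_le_one.mpr fun a ha b hb => ?_
  simp only [witnessMatrix, mem_filter, mem_univ, true_and, decide_eq_true_eq] at ha hb
  exact Fin.ext (by omega)

theorem colMajority (j : Fin t) : ColMajority (witnessMatrix t) j := by
  let allY : Finset (Fin (2 * t + 1)) := Ioi ⟨t, by omega⟩
  have hnotMem : (⟨j.val, by omega⟩ : Fin (2 * t + 1)) ∉ allY := by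
    simp [allY, Fin.lt_def]
  have hsub : insert ⟨j.val, by omega⟩ allY ⊆ univ.filter (fun i => witnessMatrix t i j = true) := by
    intro i hi
    simp only [allY, mem_insert, mem_Ioi, Fin.ext_iff, Fin.lt_def] at hi
    simp [witnessMatrix, hi]
  have := card_le_card hsub
  rw [card_insert_of_notMem hnotMem, Fin.card_Ioi, Fin.val_mk] at this
  unfold ColMajority
  omega

theorem not_majSupported {p : Fin t → Bool} (hp : t + 3 ≤ 2 * trueCount p) :
    ¬ MajSupported (witnessMatrix t) p := by
  have hsub : univ.filter (fun i => Supports (witnessMatrix t i) p) ⊆ Ioi ⟨t, by omega⟩ := by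
    intro i hi
    simp only [mem_filter, mem_univ, true_and] at hi
    by_contra hle
    simp only [mem_Ioi, Fin.lt_def, not_lt] at hle
    exact not_supports_of_trueCount_le_one (trueCount_le_one hle) hp hi
  have := card_le_card hsub
  rw [Fin.card_Ioi, Fin.val_mk] at this
  unfold MajSupported
  omega

end witnessMatrix

theorem md_upper_bound_general (t : ℕ) :
    ∃ n : ℕ, 1 ≤ n ∧ ∃ V : Fin n → Fin t → Bool,
      (∀ j, ColMajority V j) ∧
      ∀ p : Fin t → Bool, MajSupported V p → trueCount p ≤ (t + 2) / 2 := by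
  refine ⟨2 * t + 1, by omega, witnessMatrix t, witnessMatrix.colMajority, fun p hp => ?_⟩
  by_contra! hmany
  exact witnessMatrix.not_majSupported (by omega) hp

/-- there is a voter matrix with all-Y column majorities for which every
majority-supported proposal has at most ⌈(t+1)/2⌉ = (t+2)/2 true entries. -/
theorem md_upper_bound (t : ℕ) (ht : 1 ≤ t) :
    ∃ n : ℕ, 1 ≤ n ∧ ∃ V : Fin n → Fin t → Bool,
      (∀ j, ColMajority V j) ∧
      ∀ p : Fin t → Bool, MajSupported V p → trueCount p ≤ (t + 2) / 2 :=
  md_upper_bound_general t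
end

section
/- Fix t ≥ 1, k with ⌈(t+1)/2⌉ ≤ k ≤ t, and l with 0 ≤ l ≤ t. For any vector v : Fin t → Bool with exactly l entries equal to true, the number of proposals p : Fin t → Bool having exactly k entries true and supported by v (i.e. 2·|{j : v j = p j}| ≥ t) equals ∑_{x=⌈(k+l−⌊t/2⌋)/2⌉}^{k} C(l,x)·C(t−l,k−x). In particular this number, denoted s_{k,l}, depends only on k and l and not on which l entries of v are true. -/
/-!
Identify a proposal with its set `P` of true entries and the voter with its set `V`, `#V = l`.
Agreement is `t + 2 #(P ∩ V) - l - k`, so support is a lower bound on the overlap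
`x = #(P ∩ V)`, namely `x ≥ ⌈(k + l - ⌊t / 2⌋) / 2⌉`. Sorting the `k`-sets by `x`, those with
overlap `x` are a choice of `x` points of `V` and `k - x` points of its complement.
-/

open Finset

section
variable {α : Type*} [Fintype α] [DecidableEq α]

theorem card_filter_card_eq_card_inter_eq (s : Finset α) {k x : ℕ} (hxk : x ≤ k) :
    #{P : Finset α | #P = k ∧ #(P ∩ s) = x} = (#s).choose x * (#sᶜ).choose (k - x) := by
  rw [← card_powersetCard, ← card_powersetCard, ← card_product]
  have hparts {A B : Finset α} (hA : A ⊆ s) (hB : B ⊆ sᶜ) : (A ∪ B) ∩ s = A ∧ (A ∪ B) \ s = B := by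
    constructor <;> ext j <;> have := @hA j <;> have := @hB j <;>
      simp only [mem_union, mem_inter, mem_sdiff, mem_compl] at * <;> tauto
  refine card_nbij' (fun P => (P ∩ s, P \ s)) (fun AB => AB.1 ∪ AB.2) ?_ ?_ ?_ ?_
  · intro P hP
    simp only [coe_filter, mem_univ, true_and, Set.mem_ofPred_eq] at hP
    have := card_inter_add_card_sdiff P s
    simp only [coe_product, Set.mem_prod, mem_coe, mem_powersetCard]
    exact ⟨⟨inter_subset_right, hP.2⟩, fun j hj => by simpa using (mem_sdiff.1 hj).2, by omega⟩
  · rintro ⟨A, B⟩ hAB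
    simp only [coe_product, Set.mem_prod, mem_coe, mem_powersetCard] at hAB
    obtain ⟨⟨hAs, hAx⟩, hBs, hBk⟩ := hAB
    have hAB : Disjoint A B := disjoint_compl_right.mono hAs hBs
    simp only [coe_filter, mem_univ, true_and, Set.mem_ofPred_eq, card_union_of_disjoint hAB,
      (hparts hAs hBs).1]
    omega
  · intro P _
    ext j; simp only [mem_union, mem_inter, mem_sdiff]; tauto
  · rintro ⟨A, B⟩ hAB
    simp only [coe_product, Set.mem_prod, mem_coe, mem_powersetCard] at hAB
    obtain ⟨hA, hB⟩ := hparts hAB.1.1 hAB.2.1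
    exact Prod.ext hA hB

def trueSet (p : α → Bool) : Finset α := {j | p j = true}

def trueSetEquiv : (α → Bool) ≃ Finset α where
  toFun := trueSet
  invFun P j := decide (j ∈ P)
  left_inv p := by ext j; simp [trueSet]
  right_inv P := by ext j; simp [trueSet]

theorem card_filter_trueSet (Q : Finset α → Prop) [DecidablePred Q] :
    #{p : α → Bool | Q (trueSet p)} = #{P : Finset α | Q P} := by
  simp only [card_filter]
  exact trueSetEquiv.sum_comp (fun P => if Q P then 1 else 0)
end

-- Coordinatewise, `[v = p] + v + p = 1 + 2 (v ∧ p)`.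
theorem agreeCount_add_trueCount_add_trueCount {t : ℕ} (v p : Fin t → Bool) :
    agreeCount v p + trueCount v + trueCount p = t + 2 * #(trueSet p ∩ trueSet v) := by
  simp only [agreeCount, trueCount, trueSet, ← filter_and, card_filter, ← sum_add_distrib, mul_sum]
  trans ∑ j : Fin t, (1 + 2 * if p j = true ∧ v j = true then 1 else 0)
  · refine sum_congr rfl fun j _ => ?_
    cases v j <;> cases p j <;> rfl
  · simp [sum_add_distrib]

-- The support condition reads `4 x ≥ 2 (k + l) - t` for the overlap `x`, and its integer
-- solutions are exactly `x ≥ ⌈(k + l - ⌊t / 2⌋) / 2⌉`.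
theorem supports_iff_le_card_inter {t k l : ℕ} {v p : Fin t → Bool} (hv : trueCount v = l)
    (hp : trueCount p = k) :
    Supports v p ↔ (k + l - t / 2 + 1) / 2 ≤ #(trueSet p ∩ trueSet v) := by
  have := agreeCount_add_trueCount_add_trueCount v p
  unfold Supports
  omega

theorem card_filter_trueCount_eq_card_inter_eq {t k x : ℕ} (v : Fin t → Bool) (hxk : x ≤ k) :
    #{p : Fin t → Bool | trueCount p = k ∧ #(trueSet p ∩ trueSet v) = x} =
      (trueCount v).choose x * (t - trueCount v).choose (k - x) := by
  have := (card_filter_trueSet fun P => #P = k ∧ #(P ∩ trueSet v) = x).trans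
    (card_filter_card_eq_card_inter_eq _ hxk)
  rwa [card_compl, Fintype.card_fin] at this

theorem skl_formula_general (t k l : ℕ) (v : Fin t → Bool) (hv : trueCount v = l) :
    ((univ : Finset (Fin t → Bool)).filter
        (fun p => trueCount p = k ∧ Supports v p)).card =
      ∑ x ∈ Finset.Icc ((k + l - t / 2 + 1) / 2) k,
        Nat.choose l x * Nat.choose (t - l) (k - x) := by
  rw [card_eq_sum_card_fiberwise (f := fun p => #(trueSet p ∩ trueSet v)) (t := Icc _ k)]
  · refine sum_congr rfl fun x hx => ?_
    rw [mem_Icc] at hx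
    rw [← hv, ← card_filter_trueCount_eq_card_inter_eq v hx.2, filter_filter]
    refine congrArg card (filter_congr fun p _ => ⟨fun h => ⟨h.1.1, h.2⟩, fun ⟨hk, hpx⟩ => ?_⟩)
    exact ⟨⟨hk, (supports_iff_le_card_inter hv hk).2 (hpx ▸ hx.1)⟩, hpx⟩
  · intro p hp
    obtain ⟨hk, hs⟩ := (mem_filter.1 hp).2
    exact mem_Icc.2 ⟨(supports_iff_le_card_inter hv hk).1 hs,
      (card_le_card inter_subset_left).trans_eq hk⟩

/-- the number of k-proposals supported by an l-voter is
∑_{x=⌈(k+l-⌊t/2⌋)/2⌉}^{k} C(l,x)·C(t-l,k-x); in particular it only depends on k and l. -/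
theorem skl_formula (t k l : ℕ) (ht : 1 ≤ t) (hk1 : (t + 2) / 2 ≤ k) (hk2 : k ≤ t)
    (hl : l ≤ t) (v : Fin t → Bool) (hv : trueCount v = l) :
    ((univ : Finset (Fin t → Bool)).filter
        (fun p => trueCount p = k ∧ Supports v p)).card =
      ∑ x ∈ Finset.Icc ((k + l - t / 2 + 1) / 2) k,
        Nat.choose l x * Nat.choose (t - l) (k - x) :=
  skl_formula_general t k l v hv
end

section
/- For every n ≥ 1, t ≥ 1 and every voter matrix V : Fin n → Fin t → Bool in which every column has majority Y, there exists a proposal p that is supported by a majority of voters and has at least ⌈(t+1)/2⌉ entries equal to true. (That is, md_t ≥ ⌈(t+1)/2⌉: one can always find a majority-supported proposal agreeing with the majority opinion on at least ⌈(t+1)/2⌉ topics.) -/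
/-!
Reduce to an odd number `t = 2m + 1` of topics (for even `t`, drop the last topic and append a Y).
Identify a proposal with its set `S` of Y-topics and weight it by its margin `(2|S| - t)⁺`.
For an opinion set `T`, the total weight of the proposals within Hamming distance `m` of `T`
(i.e. those a voter with opinions `T` supports) is `|T| · C(2m, m)`: adding one topic to `T`
raises it by exactly `C(2m, m)`, as pairing each set with its complement shows. Summing over the
voters and using the column majorities `2 ∑ᵢ |Tᵢ| ≥ t n`, the margin-weighted average number of
supporters of a proposal is at least `n / 2`; since only proposals with more than `m` Y-entries
carry weight, one of them is supported by a majority.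
-/

open Finset

open scoped symmDiff

-- Truncated subtraction: this is `(2k - (2m + 1))⁺`, zero unless `m < k`.
def margin (m k : ℕ) : ℕ := 2 * k - (2 * m + 1)

section

variable {α : Type*} [DecidableEq α]

lemma card_symmDiff_of_subset {U X : Finset α} (hX : X ⊆ U) : #(U ∆ X) = #U - #X := by
  rw [symmDiff_of_ge hX, card_sdiff_of_subset hX]

lemma symmDiff_subset_of_subset {T W U : Finset α} (hT : T ⊆ U) (hW : W ⊆ U) : T ∆ W ⊆ U :=
  symmDiff_le (le_sup_of_le_right hT) (le_sup_of_le_right hW)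

lemma insert_eq_singleton_symmDiff {j : α} {X : Finset α} (h : j ∉ X) : insert j X = {j} ∆ X := by
  rw [symmDiff_eq_union (disjoint_singleton_left.2 h), insert_eq]

lemma sum_margin_step_eq_choose {m : ℕ} {T U : Finset α} (hU : #U = 2 * m) (hT : T ⊆ U) :
    ∑ W ∈ U.powerset with #(T ∆ W) = m, (margin m (#W + 1) - margin m #W) = (2 * m).choose m := by
  set F := {W ∈ U.powerset | #(T ∆ W) = m}
  have hF : ∀ W ∈ F, W ⊆ U ∧ #(T ∆ W) = m := by simp [F]
  have hflip : ∀ W ∈ F, U ∆ W ∈ F ∧ #(U ∆ W) = 2 * m - #W := by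
    intro W hW
    obtain ⟨hWU, hTW⟩ := hF W hW
    refine ⟨?_, by rw [card_symmDiff_of_subset hWU, hU]⟩
    simp only [F, mem_filter, mem_powerset]
    refine ⟨symmDiff_subset_of_subset subset_rfl hWU, ?_⟩
    rw [symmDiff_left_comm, card_symmDiff_of_subset (symmDiff_subset_of_subset hT hWU), hU, hTW]
    omega
  -- `W ↦ U ∆ W` is an involution of `F` taking `#W` to `2m - #W`, and the two step values sum to 2
  have hswap : ∑ W ∈ F, (margin m (2 * m - #W + 1) - margin m (2 * m - #W)) =
      ∑ W ∈ F, (margin m (#W + 1) - margin m #W) :=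
    sum_nbij' (U ∆ ·) (U ∆ ·) (fun W hW => (hflip W hW).1) (fun W hW => (hflip W hW).1)
      (fun _ _ => symmDiff_symmDiff_cancel_left _ _) (fun _ _ => symmDiff_symmDiff_cancel_left _ _)
      (fun W hW => by rw [(hflip W hW).2])
  have hpair : ∀ W ∈ F, (margin m (#W + 1) - margin m #W) +
      (margin m (2 * m - #W + 1) - margin m (2 * m - #W)) = 2 := by
    intro W hW
    have : #W ≤ 2 * m := hU ▸ card_le_card (hF W hW).1
    simp only [margin]
    omega
  have hcard : #F = (2 * m).choose m := by
    rw [← hU, ← card_powersetCard]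
    refine card_nbij' (T ∆ ·) (T ∆ ·) (fun W hW => ?_) (fun R hR => ?_)
      (fun _ _ => symmDiff_symmDiff_cancel_left _ _) (fun _ _ => symmDiff_symmDiff_cancel_left _ _)
    · obtain ⟨hWU, hTW⟩ := hF W hW
      exact mem_powersetCard.2 ⟨symmDiff_subset_of_subset hT hWU, hTW⟩
    · obtain ⟨hRU, hR⟩ := mem_powersetCard.1 hR
      simp [F, symmDiff_subset_of_subset hT hRU, hR]
  have := sum_add_distrib.symm.trans (sum_congr rfl hpair)
  rw [hswap, sum_const, smul_eq_mul] at this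
  omega

end

def ballMargin {α : Type*} [Fintype α] [DecidableEq α] (m : ℕ) (T : Finset α) : ℕ :=
  ∑ S with #(T ∆ S) ≤ m, margin m #S

section

variable {α : Type*} [Fintype α] [DecidableEq α] {m : ℕ}

lemma ballMargin_insert (hα : Fintype.card α = 2 * m + 1) {T : Finset α} {j : α} (hj : j ∉ T) :
    ballMargin m (insert j T) = ballMargin m T + (2 * m).choose m := by
  set U := univ.erase j
  have hjU : j ∉ U := notMem_erase j univ
  have hTU : T ⊆ U := fun x hx => mem_erase.2 ⟨ne_of_mem_of_not_mem hx hj, mem_univ x⟩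
  have hU : #U = 2 * m := by rw [card_erase_of_mem (mem_univ j), card_univ, hα]; rfl
  have hsplit : ∀ T' : Finset α, ballMargin m T' = ∑ W ∈ U.powerset,
      ((if #(T' ∆ W) ≤ m then margin m #W else 0) +
        if #(T' ∆ insert j W) ≤ m then margin m #(insert j W) else 0) := fun T' => by
    rw [ballMargin, sum_filter, ← powerset_univ, ← insert_erase (mem_univ j),
      sum_powerset_insert hjU, sum_add_distrib]
  -- only the pairs `W`, `insert j W` with `#(T ∆ W) = m` change their contribution
  rw [hsplit, hsplit, ← sum_margin_step_eq_choose hU hTU, sum_filter, ← sum_add_distrib]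
  refine sum_congr rfl fun W hW => ?_
  have hjW : j ∉ W := fun h => hjU (mem_powerset.1 hW h)
  have hjTW : j ∉ T ∆ W := by simp [mem_symmDiff, hj, hjW]
  have hmono : margin m #W ≤ margin m (#W + 1) := by simp only [margin]; omega
  have hjT_W : insert j T ∆ W = insert j (T ∆ W) := by
    rw [insert_eq_singleton_symmDiff hj, insert_eq_singleton_symmDiff hjTW, symmDiff_assoc]
  have hT_jW : T ∆ insert j W = insert j (T ∆ W) := by
    rw [insert_eq_singleton_symmDiff hjW, insert_eq_singleton_symmDiff hjTW, symmDiff_left_comm]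
  have hjT_jW : insert j T ∆ insert j W = T ∆ W := by
    rw [insert_eq_singleton_symmDiff hj, insert_eq_singleton_symmDiff hjW,
      symmDiff_symmDiff_symmDiff_comm, symmDiff_self, bot_symmDiff]
  rw [hjT_W, hT_jW, hjT_jW, card_insert_of_notMem hjTW, card_insert_of_notMem hjW]
  split_ifs <;> omega

lemma ballMargin_eq_card_mul_choose (hα : Fintype.card α = 2 * m + 1) (T : Finset α) :
    ballMargin m T = #T * (2 * m).choose m := by
  induction T using Finset.induction_on with
  | empty =>
    rw [card_empty, zero_mul, ballMargin]
    refine sum_eq_zero fun S hS => ?_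
    have : #S ≤ m := by simpa [← bot_eq_empty] using hS
    simp only [margin]
    omega
  | insert j T hj ih => rw [ballMargin_insert hα hj, ih, card_insert_of_notMem hj]; ring

lemma sum_margin_eq_mul_choose (hα : Fintype.card α = 2 * m + 1) :
    ∑ S : Finset α, margin m #S = (2 * m + 1) * (2 * m).choose m := by
  rw [← hα, ← card_univ, ← ballMargin_eq_card_mul_choose hα, ballMargin]
  refine (sum_filter_of_ne fun S _ hS => ?_).symm
  rw [card_symmDiff_of_subset (subset_univ S), card_univ, hα]
  simp only [margin] at hS
  omega

lemma exists_lt_card_le_two_mul_card_ball {ι : Type*} [Fintype ι] (hα : Fintype.card α = 2 * m + 1)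
    (T : ι → Finset α) (hT : ∀ j, Fintype.card ι ≤ 2 * #{i | j ∈ T i}) :
    ∃ S : Finset α, m < #S ∧ Fintype.card ι ≤ 2 * #{i | #(T i ∆ S) ≤ m} := by
  set N := Fintype.card ι
  set supp := fun S : Finset α => #{i | #(T i ∆ S) ≤ m}
  have hcols : (2 * m + 1) * N ≤ 2 * ∑ i, #(T i) := by
    have hdouble : ∑ i, #(T i) = ∑ j, #{i | j ∈ T i} := by
      simp only [card_filter]
      rw [sum_comm]
      simp
    rw [hdouble, mul_sum, ← hα, ← card_univ, ← smul_eq_mul, ← sum_const]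
    exact sum_le_sum fun j _ => hT j
  have hswap : ∑ i, ballMargin m (T i) = ∑ S : Finset α, margin m #S * supp S := by
    simp only [ballMargin, sum_filter]
    rw [sum_comm]
    refine sum_congr rfl fun S _ => ?_
    rw [← sum_filter, sum_const, smul_eq_mul, mul_comm]
  by_contra! hsmall
  have hlt : ∑ S : Finset α, margin m #S * (2 * supp S) < ∑ S : Finset α, margin m #S * N := by
    refine sum_lt_sum (fun S _ => ?_) ⟨univ, mem_univ _, ?_⟩
    · by_cases hS : m < #S
      · exact Nat.mul_le_mul_left _ (hsmall S hS).le
      · simp [margin, show 2 * #S - (2 * m + 1) = 0 by omega]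
    · have hpos : 0 < margin m #(univ : Finset α) := by simp only [margin, card_univ, hα]; omega
      exact Nat.mul_lt_mul_of_pos_left (hsmall univ (by rw [card_univ, hα]; omega)) hpos
  have hge : ∑ S : Finset α, margin m #S * N ≤ ∑ S : Finset α, margin m #S * (2 * supp S) := calc
    ∑ S : Finset α, margin m #S * N = (2 * m + 1) * N * (2 * m).choose m := by
      rw [← sum_mul, sum_margin_eq_mul_choose hα]; ring
    _ ≤ 2 * (∑ i, #(T i)) * (2 * m).choose m := Nat.mul_le_mul_right _ hcols
    _ = ∑ S : Finset α, margin m #S * (2 * supp S) := by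
      simp_rw [mul_assoc, sum_mul, ← ballMargin_eq_card_mul_choose hα, hswap, mul_sum]
      exact sum_congr rfl fun _ _ => by ring
  exact hge.not_gt hlt

end

def yesTopics {t : ℕ} (v : Fin t → Bool) : Finset (Fin t) := {j | v j = true}

lemma agreeCount_add_card_symmDiff {t : ℕ} (v : Fin t → Bool) (S : Finset (Fin t)) :
    agreeCount v (fun j => decide (j ∈ S)) + #(yesTopics v ∆ S) = t := by
  have hdisagree : yesTopics v ∆ S = ({j | ¬v j = decide (j ∈ S)} : Finset (Fin t)) := by
    ext j
    cases v j <;> by_cases j ∈ S <;> simp [yesTopics, mem_symmDiff, *]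
  rw [agreeCount, hdisagree, card_filter_add_card_filter_not, card_univ, Fintype.card_fin]

lemma trueCount_decide_mem {t : ℕ} (S : Finset (Fin t)) :
    trueCount (fun j => decide (j ∈ S)) = #S := by
  simp [trueCount]

lemma agreeCount_init_le {t : ℕ} (v p : Fin (t + 1) → Bool) :
    agreeCount (Fin.init v) (Fin.init p) ≤ agreeCount v p := by
  rw [agreeCount, agreeCount, card_filter, card_filter, Fin.sum_univ_castSucc]
  exact Nat.le_add_right _ _

lemma Supports.of_init {m : ℕ} {v p : Fin (2 * m + 1 + 1) → Bool}
    (h : Supports (Fin.init v) (Fin.init p)) : Supports v p := by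
  have := agreeCount_init_le v p
  unfold Supports at *
  omega

lemma trueCount_snoc_true {t : ℕ} (p : Fin t → Bool) :
    trueCount (Fin.snoc p true : Fin (t + 1) → Bool) = trueCount p + 1 := by
  rw [trueCount, trueCount, card_filter, card_filter, Fin.sum_univ_castSucc]
  simp

lemma MajSupported.mono {n t t' : ℕ} {V : Fin n → Fin t → Bool} {W : Fin n → Fin t' → Bool}
    {p : Fin t → Bool} {q : Fin t' → Bool} (h : ∀ i, Supports (V i) p → Supports (W i) q)
    (hp : MajSupported V p) : MajSupported W q :=
  hp.trans (Nat.mul_le_mul_left 2 (card_le_card (monotone_filter_right _ fun i _ => h i)))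

lemma exists_majSupported_lt_trueCount_of_odd {n m : ℕ} (V : Fin n → Fin (2 * m + 1) → Bool)
    (hmaj : ∀ j, ColMajority V j) : ∃ p, MajSupported V p ∧ m < trueCount p := by
  obtain ⟨S, hS, hball⟩ := exists_lt_card_le_two_mul_card_ball (Fintype.card_fin _)
    (fun i => yesTopics (V i)) (fun j => by simpa [ColMajority, yesTopics] using hmaj j)
  refine ⟨fun j => decide (j ∈ S), ?_, by rwa [trueCount_decide_mem]⟩
  have hsupp : ∀ i, Supports (V i) (fun j => decide (j ∈ S)) ↔ #(yesTopics (V i) ∆ S) ≤ m := by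
    intro i
    have := agreeCount_add_card_symmDiff (V i) S
    unfold Supports
    omega
  simpa [MajSupported, hsupp] using hball

lemma exists_majSupported_lt_trueCount_of_even {n m : ℕ} (V : Fin n → Fin (2 * m + 1 + 1) → Bool)
    (hmaj : ∀ j, ColMajority V j) : ∃ p, MajSupported V p ∧ m + 1 < trueCount p := by
  obtain ⟨p, hp, hcount⟩ :=
    exists_majSupported_lt_trueCount_of_odd (fun i => Fin.init (V i)) fun j => hmaj j.castSucc
  refine ⟨Fin.snoc p true, hp.mono fun i hi => Supports.of_init ?_, ?_⟩
  · rwa [Fin.init_snoc]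
  · rw [trueCount_snoc_true]
    omega

theorem md_lower_bound_general (n t : ℕ) (ht : 1 ≤ t)
    (V : Fin n → Fin t → Bool) (hmaj : ∀ j, ColMajority V j) :
    ∃ p : Fin t → Bool, MajSupported V p ∧ (t + 2) / 2 ≤ trueCount p := by
  obtain ⟨m, rfl | rfl⟩ : ∃ m, t = 2 * m + 1 ∨ t = 2 * m + 1 + 1 := by
    obtain ⟨k, rfl | rfl⟩ := Nat.even_or_odd' t
    exacts [⟨k - 1, Or.inr (by omega)⟩, ⟨k, Or.inl rfl⟩]
  · obtain ⟨p, hp, hcount⟩ := exists_majSupported_lt_trueCount_of_odd V hmaj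
    exact ⟨p, hp, by omega⟩
  · obtain ⟨p, hp, hcount⟩ := exists_majSupported_lt_trueCount_of_even V hmaj
    exact ⟨p, hp, by omega⟩

/-- every voter matrix with all-Y column majorities admits a majority-supported
proposal with at least ⌈(t+1)/2⌉ = (t+2)/2 true entries. -/
theorem md_lower_bound (n t : ℕ) (hn : 1 ≤ n) (ht : 1 ≤ t)
    (V : Fin n → Fin t → Bool) (hmaj : ∀ j, ColMajority V j) :
    ∃ p : Fin t → Bool, MajSupported V p ∧ (t + 2) / 2 ≤ trueCount p :=
  md_lower_bound_general n t ht V hmaj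
end

section
/- Let V : Fin n → Fin t → Bool be any voter matrix and let p be a proposal that is supported by a majority of voters. Then the number of matches of p satisfies 4·|{(i,j) : V i j = p j}| ≥ n·t, i.e. the absolute representativeness R_p of any majority-supported proposal is at least 1/4. -/
open Finset

lemma match_eq_sum {n t : ℕ} (V : Fin n → Fin t → Bool) (p : Fin t → Bool) :
    matchCount V p = ∑ i, agreeCount (V i) p := by
  unfold matchCount agreeCount
  rw [Finset.card_filter, Fintype.sum_prod_type]
  simp only [Finset.card_filter]

/-- any majority-supported proposal has at least nt/4 matches. -/
theorem quarter_representativeness (n t : ℕ) (V : Fin n → Fin t → Bool)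
    (p : Fin t → Bool) (hp : MajSupported V p) :
    n * t ≤ 4 * matchCount V p := by
  set S := univ.filter (fun i => Supports (V i) p) with hS
  have h1 : S.card * t ≤ ∑ i ∈ S, 2 * agreeCount (V i) p := by
    calc S.card * t = ∑ _i ∈ S, t := by rw [Finset.sum_const, smul_eq_mul]
    _ ≤ ∑ i ∈ S, 2 * agreeCount (V i) p := by
        apply Finset.sum_le_sum
        intro i hi
        exact (Finset.mem_filter.mp hi).2
  have h2 : ∑ i ∈ S, agreeCount (V i) p ≤ ∑ i, agreeCount (V i) p :=
    Finset.sum_le_sum_of_subset (Finset.filter_subset _ _)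
  have h3 : n * t ≤ 2 * S.card * t := Nat.mul_le_mul_right t hp
  calc n * t ≤ 2 * S.card * t := h3
  _ = 2 * (S.card * t) := by ring
  _ ≤ 2 * ∑ i ∈ S, 2 * agreeCount (V i) p := Nat.mul_le_mul_left 2 h1
  _ = 4 * ∑ i ∈ S, agreeCount (V i) p := by
      rw [Finset.mul_sum, Finset.mul_sum]; exact Finset.sum_congr rfl fun i _ => by ring
  _ ≤ 4 * ∑ i, agreeCount (V i) p := Nat.mul_le_mul_left 4 h2
  _ = 4 * matchCount V p := by rw [match_eq_sum]
end

section
/- For every n ≥ 1, t ≥ 1 and every voter matrix V : Fin n → Fin t → Bool in which every column has majority Y, there exists a proposal p supported by a majority of voters whose number of matches satisfies 2·|{(i,j) : V i j = p j}| ≥ n·(t − 2), i.e. its absolute representativeness R_p is at least 1/2 − 1/t. -/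
open Finset

section Aux

variable {n t : ℕ}

lemma bool_ne_iff (a b : Bool) : (a = !b) ↔ ¬ (a = b) := by
  cases a <;> cases b <;> simp

lemma agree_compl (v p : Fin t → Bool) :
    agreeCount v p + agreeCount v (fun j => !p j) = t := by
  unfold agreeCount
  have h2 : (univ.filter (fun j => v j = !p j)).card
      = (univ.filter (fun j => ¬ (v j = p j))).card := by
    congr 1
    apply Finset.filter_congr
    intro j _
    simp [bool_ne_iff]
  rw [h2, Finset.card_filter_add_card_filter_not]
  simp

lemma supports_or (v p : Fin t → Bool) :
    Supports v p ∨ Supports v (fun j => !p j) := by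
  have := agree_compl v p
  unfold Supports at *
  omega

lemma maj_or (V : Fin n → Fin t → Bool) (p : Fin t → Bool) :
    MajSupported V p ∨ MajSupported V (fun j => !p j) := by
  have hsub : (univ : Finset (Fin n)) ⊆
      univ.filter (fun i => Supports (V i) p)
        ∪ univ.filter (fun i => Supports (V i) (fun j => !p j)) := by
    intro i _
    rcases supports_or (V i) p with h | h
    · exact Finset.mem_union_left _ (by simp [h])
    · exact Finset.mem_union_right _ (by simp [h])
  have hc : n ≤ (univ.filter (fun i => Supports (V i) p)).card
      + (univ.filter (fun i => Supports (V i) (fun j => !p j))).card := by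
    calc n = (univ : Finset (Fin n)).card := by simp
    _ ≤ _ := Finset.card_le_card hsub
    _ ≤ _ := Finset.card_union_le _ _
  unfold MajSupported
  omega

lemma match_compl (V : Fin n → Fin t → Bool) (p : Fin t → Bool) :
    matchCount V p + matchCount V (fun j => !p j) = n * t := by
  unfold matchCount
  have h2 : (univ.filter (fun ij : Fin n × Fin t => V ij.1 ij.2 = !p ij.2)).card
      = (univ.filter (fun ij : Fin n × Fin t => ¬ (V ij.1 ij.2 = p ij.2))).card := by
    congr 1
    apply Finset.filter_congr
    intro ij _
    simp [bool_ne_iff]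
  rw [h2, Finset.card_filter_add_card_filter_not]
  simp

lemma matchCount_eq_sum (V : Fin n → Fin t → Bool) (p : Fin t → Bool) :
    matchCount V p = ∑ j : Fin t, (univ.filter (fun i => V i j = p j)).card := by
  unfold matchCount
  rw [Finset.card_filter, Fintype.sum_prod_type, Finset.sum_comm]
  congr 1
  ext j
  rw [Finset.card_filter]

lemma col_split (V : Fin n → Fin t → Bool) (j : Fin t) :
    (univ.filter (fun i => V i j = true)).card
      + (univ.filter (fun i => V i j = false)).card = n := by
  have h2 : (univ.filter (fun i => V i j = false)).card
      = (univ.filter (fun i => ¬ (V i j = true))).card := by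
    congr 1
    apply Finset.filter_congr
    intro i _
    simp
  rw [h2, Finset.card_filter_add_card_filter_not]
  simp

end Aux


/-- there is a majority-supported proposal whose number of matches is at
least n(t-2)/2, i.e. with absolute representativeness at least 1/2 - 1/t. -/
theorem half_representativeness (n t : ℕ) (hn : 1 ≤ n) (ht : 1 ≤ t)
    (V : Fin n → Fin t → Bool) (hmaj : ∀ j, ColMajority V j) :
    ∃ p : Fin t → Bool, MajSupported V p ∧ n * (t - 2) ≤ 2 * matchCount V p := by
  -- the walk of proposals
  set P : ℕ → Fin t → Bool := fun k j => decide (k ≤ j.val) with hP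
  set M : ℕ → ℕ := fun k => matchCount V (P k) with hM
  -- step bound
  have step : ∀ k, k < t → M k ≤ M (k + 1) + n := by
    intro k hk
    set jk : Fin t := ⟨k, hk⟩ with hjk
    have h1 : M k = matchCount V (P k) := rfl
    have h2 : M (k+1) = matchCount V (P (k+1)) := rfl
    rw [h1, h2, matchCount_eq_sum, matchCount_eq_sum]
    rw [← Finset.add_sum_erase _ _ (Finset.mem_univ jk),
        ← Finset.add_sum_erase _ _ (Finset.mem_univ jk)]
    have heq : ∑ j ∈ univ.erase jk, (univ.filter (fun i => V i j = P k j)).card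
        = ∑ j ∈ univ.erase jk, (univ.filter (fun i => V i j = P (k+1) j)).card := by
      apply Finset.sum_congr rfl
      intro j hj
      have hjne : j.val ≠ k := by
        intro hc
        apply (Finset.mem_erase.mp hj).1
        apply Fin.ext
        exact hc
      have : P k j = P (k+1) j := by
        simp only [hP]
        have : (k ≤ j.val) ↔ (k + 1 ≤ j.val) := by omega
        simp [this]
      rw [this]
    rw [heq]
    have hPk : P k jk = true := by simp [hP, hjk]
    have hPk1 : P (k+1) jk = false := by simp [hP, hjk]
    rw [hPk, hPk1]
    have := col_split V jk
    omega
  -- endpoints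
  have hM0 : n * t ≤ 2 * M 0 := by
    have : M 0 = ∑ j : Fin t, (univ.filter (fun i => V i j = true)).card := by
      rw [hM]
      simp only
      rw [matchCount_eq_sum]
      apply Finset.sum_congr rfl
      intro j _
      have : P 0 j = true := by simp [hP]
      rw [this]
    rw [this, Finset.mul_sum]
    calc n * t = ∑ _j : Fin t, n := by simp [mul_comm]
    _ ≤ ∑ j : Fin t, 2 * (univ.filter (fun i => V i j = true)).card :=
        Finset.sum_le_sum (fun j _ => hmaj j)
  have hMt : 2 * M t ≤ n * t := by
    have : M t = ∑ j : Fin t, (univ.filter (fun i => V i j = false)).card := by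
      rw [hM]
      simp only
      rw [matchCount_eq_sum]
      apply Finset.sum_congr rfl
      intro j _
      have : P t j = false := by simp [hP, Fin.is_lt, Nat.not_le.mpr j.is_lt]
      rw [this]
    rw [this, Finset.mul_sum]
    calc ∑ j : Fin t, 2 * (univ.filter (fun i => V i j = false)).card
        ≤ ∑ _j : Fin t, n := by
          apply Finset.sum_le_sum
          intro j _
          have h1 := col_split V j
          have h2 := hmaj j
          unfold ColMajority at h2
          omega
    _ = n * t := by simp [mul_comm]
  -- minimal k with 2 * M k ≤ n * t
  set S : Finset ℕ := (Finset.range (t+1)).filter (fun k => 2 * M k ≤ n * t) with hS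
  have hSne : S.Nonempty := ⟨t, by simp [hS, hMt]⟩
  set k := S.min' hSne with hk
  have hkS : k ∈ S := Finset.min'_mem _ _
  have hkle : k ≤ t := by
    have := (Finset.mem_filter.mp hkS).1
    simp at this
    omega
  have hkub : 2 * M k ≤ n * t := (Finset.mem_filter.mp hkS).2
  have hklb : n * t ≤ 2 * M k + 2 * n := by
    rcases Nat.eq_zero_or_pos k with h0 | hpos
    · rw [h0]; omega
    · have hmnot : k - 1 ∉ S := by
        intro hc
        have := Finset.min'_le S (k - 1) hc
        omega
      have hm : n * t < 2 * M (k - 1) := by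
        by_contra hc
        exact hmnot (by simp only [hS, Finset.mem_filter, Finset.mem_range]; omega)
      have hstep := step (k - 1) (by omega)
      have he : k - 1 + 1 = k := by omega
      rw [he] at hstep
      omega
  -- conclude
  have hnt2 : n * (t - 2) + 2 * n = n * t ∨ n * (t-2) = 0 := by
    rcases Nat.lt_or_ge t 2 with h | h
    · right
      have : t - 2 = 0 := by omega
      rw [this, mul_zero]
    · left
      obtain ⟨u, rfl⟩ : ∃ u, t = u + 2 := ⟨t - 2, by omega⟩
      have : u + 2 - 2 = u := by omega
      rw [this]
      ring
  have hcompl := match_compl V (P k)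
  rcases maj_or V (P k) with hmj | hmj
  · refine ⟨P k, hmj, ?_⟩
    have : matchCount V (P k) = M k := rfl
    rw [this]
    rcases hnt2 with h | h
    · omega
    · omega
  · refine ⟨fun j => !(P k j), hmj, ?_⟩
    rw [show matchCount V (P k) = M k from rfl] at hcompl
    omega
end

section
/- Let V : Fin n → Fin 3 → Bool be a voter matrix with three topics such that every column strictly exceeds a two-thirds majority of Y, i.e. 3·|{i : V i j = true}| > 2n for each j. Then the all-Y proposal is supported by a majority of voters. -/
open Finset

/-- if each of the three columns strictly exceeds a two-thirds majority of
Y, the all-Y proposal is supported by a majority. -/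
theorem two_thirds_majority (n : ℕ) (V : Fin n → Fin 3 → Bool)
    (h : ∀ j : Fin 3, 2 * n < 3 * (univ.filter (fun i => V i j = true)).card) :
    MajSupported V (fun _ => true) := by
  set p : Fin 3 → Bool := fun _ => true with hp
  -- double counting
  have hsum : ∑ i : Fin n, agreeCount (V i) p
      = ∑ j : Fin 3, (univ.filter (fun i => V i j = true)).card := by
    simp only [agreeCount, card_filter, hp]
    exact Finset.sum_comm
  have hS : 2 * n < ∑ i : Fin n, agreeCount (V i) p := by
    have := fun j => h j
    rw [hsum, Fin.sum_univ_three]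
    have h0 := h 0; have h1 := h 1; have h2 := h 2
    omega
  -- split voters into supporters and non-supporters
  set s := (univ.filter (fun i => Supports (V i) p)).card with hs
  have hsplit := Finset.card_filter_add_card_filter_not
    (s := (univ : Finset (Fin n))) (p := fun i => Supports (V i) p)
  have hcardU : (univ : Finset (Fin n)).card = n := Finset.card_univ.trans (Fintype.card_fin n)
  have hbound : ∑ i : Fin n, agreeCount (V i) p
      ≤ 3 * s + (univ.filter (fun i => ¬ Supports (V i) p)).card := by
    rw [← Finset.sum_filter_add_sum_filter_not univ (fun i => Supports (V i) p)]
    have b1 : ∑ i ∈ univ.filter (fun i => Supports (V i) p), agreeCount (V i) p ≤ 3 * s := by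
      rw [hs, Finset.card_eq_sum_ones, Finset.mul_sum]
      refine Finset.sum_le_sum fun i _ => ?_
      have : agreeCount (V i) p ≤ 3 := by
        simpa [agreeCount] using (Finset.card_filter_le (univ : Finset (Fin 3)) _)
      omega
    have b2 : ∑ i ∈ univ.filter (fun i => ¬ Supports (V i) p), agreeCount (V i) p
        ≤ (univ.filter (fun i => ¬ Supports (V i) p)).card := by
      rw [Finset.card_eq_sum_ones]
      refine Finset.sum_le_sum fun i hi => ?_
      have hns : ¬ Supports (V i) p := (Finset.mem_filter.mp hi).2
      simp only [Supports, not_le] at hns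
      omega
    omega
  simp only [MajSupported]
  omega
end

section
/- Let V : Fin n → Fin 3 → Bool be a voter matrix with three topics such that each of the first two columns has majority Y, i.e. 2·|{i : V i j = true}| ≥ n for j = 0 and j = 1. Then at least one of the two proposals (Y,Y,Y) and (Y,Y,N) is supported by a majority of voters. Moreover, the number of voters supporting (Y,Y,Y) plus the number of voters supporting (Y,Y,N) equals the total number of true entries of V in the first two columns. -/
open Finset

set_option maxRecDepth 8000 in
lemma key_voter (v : Fin 3 → Bool) :
    (if Supports v ![true, true, true] then 1 else 0) +
      (if Supports v ![true, true, false] then 1 else 0) =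
      (univ.filter (fun j : Fin 3 => j.val < 2 ∧ v j = true)).card := by
  have e : ∀ p : Fin 3 → Bool, agreeCount v p =
      (if v 0 = p 0 then 1 else 0) + (if v 1 = p 1 then 1 else 0) +
        (if v 2 = p 2 then 1 else 0) := by
    intro p
    rw [agreeCount, Finset.card_filter, Fin.sum_univ_three]
  have e2 : (univ.filter (fun j : Fin 3 => j.val < 2 ∧ v j = true)).card =
      (if v 0 = true then 1 else 0) + (if v 1 = true then 1 else 0) := by
    rw [Finset.card_filter, Fin.sum_univ_three]
    norm_num
  rw [e2]
  cases hv0 : v 0 <;> cases hv1 : v 1 <;> cases hv2 : v 2 <;>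
    simp [Supports, e, hv0, hv1, hv2]

/-- with Y-majorities on the first two of three topics, one of (Y,Y,Y) and
(Y,Y,N) is majority supported, and their supporter counts sum to the number of true
entries in the first two columns. -/

theorem yyy_or_yyn (n : ℕ) (V : Fin n → Fin 3 → Bool)
    (h0 : ColMajority V 0) (h1 : ColMajority V 1) :
    (MajSupported V ![true, true, true] ∨ MajSupported V ![true, true, false]) ∧
    (univ.filter (fun i => Supports (V i) ![true, true, true])).card +
        (univ.filter (fun i => Supports (V i) ![true, true, false])).card =
      ((univ : Finset (Fin n × Fin 3)).filter
        (fun ij => ij.2.val < 2 ∧ V ij.1 ij.2 = true)).card := by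
  have hsum :
      (univ.filter (fun i => Supports (V i) ![true, true, true])).card +
        (univ.filter (fun i => Supports (V i) ![true, true, false])).card =
      ((univ : Finset (Fin n × Fin 3)).filter
        (fun ij => ij.2.val < 2 ∧ V ij.1 ij.2 = true)).card := by
    rw [Finset.card_filter, Finset.card_filter, Finset.card_filter,
      Fintype.sum_prod_type, ← Finset.sum_add_distrib]
    refine Finset.sum_congr rfl fun i _ => ?_
    rw [key_voter (V i), Finset.card_filter]
  refine ⟨?_, hsum⟩
  have hcols : ((univ : Finset (Fin n × Fin 3)).filter
      (fun ij => ij.2.val < 2 ∧ V ij.1 ij.2 = true)).card =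
      (univ.filter (fun i => V i 0 = true)).card +
        (univ.filter (fun i => V i 1 = true)).card := by
    rw [Finset.card_filter, Fintype.sum_prod_type, Finset.card_filter, Finset.card_filter,
      ← Finset.sum_add_distrib]
    refine Finset.sum_congr rfl fun i _ => ?_
    rw [Fin.sum_univ_three]
    norm_num
  by_contra hcon
  push_neg at hcon
  obtain ⟨c1, c2⟩ := hcon
  simp only [MajSupported, not_le] at c1 c2
  have h0' := h0
  have h1' := h1
  unfold ColMajority at h0' h1'
  omega
end

section
/- For every t ≥ 2 and every real ε > 0, there exist n ≥ 1 and a voter matrix V : Fin n → Fin t → Bool in which every column has majority Y, such that the all-Y proposal has a positive number of matches and every proposal p supported by a majority of voters satisfies (number of matches of p) ≤ (2·√6 − 4 + (2/t)·(1 − √(2/3)) + ε)·(number of matches of the all-Y proposal). In particular, the infimum r_t over voter matrices of the best relative representativeness of a majority-supported proposal satisfies limsup_{t→∞} r_t ≤ 2√6 − 4. -/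
open Finset

/-!
For `t ≥ 4` take `t w - 1` all-Y voters and, for each `k : Fin t`, `w` voters saying Y exactly on
the cyclic window of length `ℓ ≈ (√6 - 2) t / 2` starting at `k`. Each column then has
`t w - 1 + ℓ w` Y's, a majority. The all-Y voters fall one short of a majority, so a
majority-supported proposal is supported by some window voter, which caps its number of Y's at
`t / 2 + ℓ`. The matches of a proposal grow with its number of Y's, so they are at most
`(t² + 2ℓ²) w`, against `t (t + ℓ) w - t` for the all-Y proposal. For `x = ℓ / t` the ratio
`(1 + 2x²) / (1 + x)` attains its minimum `2√6 - 4` at `x = (√6 - 2) / 2`; rounding `ℓ` costs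
the `2 / t` term and a large `w` absorbs the rest into `ε`. For `t ≤ 3` the bound is at least `1`
and a single all-Y voter will do.
-/

lemma card_filter_eq_false {ι : Type*} [Fintype ι] (f : ι → Bool) :
    #{i | f i = false} = Fintype.card ι - #{i | f i = true} := by
  have := card_filter_add_card_filter_not (s := univ) (fun i => f i = true)
  simp only [Bool.not_eq_true, card_univ] at this
  omega

lemma sub_trueCount {t : ℕ} (p : Fin t → Bool) : t - trueCount p = #{j | p j = false} := by
  rw [card_filter_eq_false, Fintype.card_fin, trueCount]

lemma agreeCount_le {t : ℕ} (v p : Fin t → Bool) :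
    agreeCount v p ≤ (t - trueCount p) + trueCount v := by
  rw [sub_trueCount]
  refine (card_le_card fun j hj => ?_).trans (card_union_le _ _)
  cases hpj : p j <;> simp_all

lemma trueCount_le {t : ℕ} (p : Fin t → Bool) : trueCount p ≤ t :=
  (card_filter_le _ _).trans (card_fin t).le

lemma two_mul_trueCount_le_of_supports {t : ℕ} {v p : Fin t → Bool} (h : Supports v p) :
    2 * trueCount p ≤ t + 2 * trueCount v := by
  have := trueCount_le p
  have := agreeCount_le v p
  rw [Supports] at h
  omega

lemma matchCount_eq_of_card_col {n t c : ℕ} (V : Fin n → Fin t → Bool)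
    (hV : ∀ j, #{i | V i j = true} = c) (p : Fin t → Bool) :
    matchCount V p = trueCount p * c + (t - trueCount p) * (n - c) := by
  have hcol (j : Fin t) : #{i | V i j = p j} = if p j = true then c else n - c := by
    cases p j
    · simp [card_filter_eq_false, hV]
    · simp [hV]
  have hsum : matchCount V p = ∑ j, #{i | V i j = p j} := by
    simp only [matchCount, card_filter, Fintype.sum_prod_type]
    exact sum_comm
  rw [hsum, sum_congr rfl fun j _ => hcol j, sum_ite, sum_const, sum_const, smul_eq_mul,
    smul_eq_mul, sub_trueCount]
  simp only [Bool.not_eq_true, trueCount]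

lemma one_le_of_matchCount_pos {n t : ℕ} {V : Fin n → Fin t → Bool} {p : Fin t → Bool}
    (h : 0 < matchCount V p) : 1 ≤ n := by
  by_contra! hn
  obtain rfl : n = 0 := by omega
  simp [matchCount] at h

def cyclicWindow (t ℓ : ℕ) (k : Fin t) : Fin t → Bool :=
  fun j => decide (((j - k : Fin t) : ℕ) < ℓ)

lemma trueCount_cyclicWindow {t ℓ : ℕ} [NeZero t] (h : ℓ ≤ t) (k : Fin t) :
    trueCount (cyclicWindow t ℓ k) = ℓ := by
  refine (card_equiv (Equiv.subRight k) ?_).trans (Fin.card_filter_val_lt.trans (min_eq_right h))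
  simp [cyclicWindow]

lemma card_cyclicWindow_col {t ℓ : ℕ} [NeZero t] (h : ℓ ≤ t) (j : Fin t) :
    #{k | cyclicWindow t ℓ k j = true} = ℓ := by
  refine (card_equiv (Equiv.subLeft j) ?_).trans (Fin.card_filter_val_lt.trans (min_eq_right h))
  simp [cyclicWindow]

-- The voters are `Fin a ⊕ (Fin t × Fin w)`: `a` all-Y voters, and `w` copies of each window.
def cyclicProfile (t ℓ a w : ℕ) : Fin (a + t * w) → Fin t → Bool :=
  fun i => Sum.elim (fun _ _ => true) (fun b => cyclicWindow t ℓ (finProdFinEquiv.symm b).1)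
    (finSumFinEquiv.symm i)

lemma card_filter_cyclicProfile {t ℓ a w : ℕ} (P : (Fin t → Bool) → Prop) [DecidablePred P] :
    #{i | P (cyclicProfile t ℓ a w i)}
      = (if P (fun _ => true) then a else 0) + w * #{k | P (cyclicWindow t ℓ k)} := by
  rw [card_filter, card_filter, ← finSumFinEquiv.sum_comp, Fintype.sum_sum_type,
    ← finProdFinEquiv.sum_comp, Fintype.sum_prod_type]
  simp only [cyclicProfile, Equiv.symm_apply_apply, Sum.elim_inl, Sum.elim_inr]
  simp [sum_ite, mul_comm]

lemma card_col_cyclicProfile {t ℓ a w : ℕ} [NeZero t] (h : ℓ ≤ t) (j : Fin t) :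
    #{i | cyclicProfile t ℓ a w i j = true} = a + ℓ * w := by
  rw [card_filter_cyclicProfile (fun v => v j = true), card_cyclicWindow_col h, if_pos rfl,
    mul_comm]

lemma matchCount_cyclicProfile_true {t ℓ a w : ℕ} [NeZero t] (h : ℓ ≤ t) :
    matchCount (cyclicProfile t ℓ a w) (fun _ => true) = t * (a + ℓ * w) := by
  simp [matchCount_eq_of_card_col _ (card_col_cyclicProfile h), trueCount]

lemma exists_cyclicWindow_supports {t ℓ a w : ℕ} {p : Fin t → Bool} (ha : a < t * w)
    (hp : MajSupported (cyclicProfile t ℓ a w) p) : ∃ k, Supports (cyclicWindow t ℓ k) p := by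
  by_contra! h
  rw [MajSupported, card_filter_cyclicProfile (fun v => Supports v p),
    filter_false_of_mem fun k _ => h k, card_empty] at hp
  split_ifs at hp <;> omega

lemma matchCount_cyclicProfile_le {t ℓ a w : ℕ} [NeZero t] {p : Fin t → Bool} (hℓ : ℓ ≤ t)
    (ha : a ≤ t * w) (hp : 2 * trueCount p ≤ t + 2 * ℓ) :
    matchCount (cyclicProfile t ℓ a w) p ≤ (t ^ 2 + 2 * ℓ ^ 2) * w := by
  rw [matchCount_eq_of_card_col _ (card_col_cyclicProfile hℓ)]
  have hZ := trueCount_le p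
  have hcol : a + ℓ * w ≤ a + t * w := by gcongr
  zify [hZ, hcol] at ha hp ⊢
  nlinarith [mul_le_mul_of_nonneg_left ha (Int.natCast_nonneg (trueCount p)),
    mul_nonneg (mul_nonneg (sub_nonneg.2 hp) (Int.natCast_nonneg ℓ)) (Int.natCast_nonneg w)]

noncomputable def rBound (t : ℕ) : ℝ := 2 * √6 - 4 + (2 / t) * (1 - √(2 / 3))

lemma sqrt_two_div_three : √(2 / 3) = √6 / 3 := by
  rw [show (2 / 3 : ℝ) = 6 / 3 ^ 2 by norm_num, Real.sqrt_div' _ (by norm_num : (0 : ℝ) ≤ 3 ^ 2),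
    Real.sqrt_sq (by norm_num)]

lemma sqrt_six_mem_Ioo : √6 ∈ Set.Ioo (2449 / 1000 : ℝ) (49 / 20) := by
  constructor
  · rw [Real.lt_sqrt (by norm_num)]; norm_num
  · rw [Real.sqrt_lt' (by norm_num)]; norm_num

lemma rBound_le_two {t : ℕ} (ht : 1 ≤ t) : rBound t ≤ 2 := by
  obtain ⟨hs, hs'⟩ := sqrt_six_mem_Ioo
  have ht' : (2 / t : ℝ) ≤ 2 := div_le_self zero_le_two (by exact_mod_cast ht)
  rw [rBound, sqrt_two_div_three]
  nlinarith [div_nonneg zero_le_two (Nat.cast_nonneg (α := ℝ) t)]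

lemma one_le_rBound {t : ℕ} (ht : 1 ≤ t) (ht' : t ≤ 3) : 1 ≤ rBound t := by
  obtain ⟨hs, hs'⟩ := sqrt_six_mem_Ioo
  have h : (2 / 3 : ℝ) ≤ 2 / t :=
    div_le_div_of_nonneg_left zero_le_two (by exact_mod_cast ht) (by exact_mod_cast ht')
  rw [rBound, sqrt_two_div_three]
  nlinarith

lemma sq_add_two_mul_sq_le {t : ℕ} (ht : 4 ≤ t) {L : ℝ} (hL : (√6 - 2) / 2 * t ≤ L)
    (hL' : L ≤ (√6 - 2) / 2 * t + 1) : (t : ℝ) ^ 2 + 2 * L ^ 2 ≤ rBound t * (t * (t + L)) := by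
  obtain ⟨hs, hs'⟩ := sqrt_six_mem_Ioo
  have hs6 : √6 ^ 2 = 6 := Real.sq_sqrt (by norm_num)
  have hT : (4 : ℝ) ≤ t := by exact_mod_cast ht
  rw [rBound, sqrt_two_div_three]
  set s := √6
  set T : ℝ := (t : ℝ)
  set δ := L - (s - 2) / 2 * T with hδ
  have hsq : T ^ 2 + 2 * L ^ 2 = (2 * s - 4) * (T * (T + L)) + 2 * δ ^ 2 := by
    rw [hδ]; linear_combination (-(T ^ 2) / 2) * hs6
  have hbound : (2 * s - 4 + 2 / T * (1 - s / 3)) * (T * (T + L))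
      = (2 * s - 4) * (T * (T + L)) + 2 * (1 - s / 3) * (T + L) := by
    field_simp
  have hδ2 : δ ^ 2 ≤ (1 - s / 3) * (T + L) := by
    have hsplit : (1 - s / 3) * (T + L) = (s / 2 - 1) * T + (1 - s / 3) * δ := by
      rw [hδ]; linear_combination (-T / 6) * hs6
    -- `δ² ≤ δ` as `0 ≤ δ ≤ 1`, and `(√6 / 3) δ ≤ √6 / 3 ≤ (√6 / 2 - 1) T` as `T ≥ 4`
    nlinarith
  rw [hsq, hbound]
  linarith

lemma sq_add_two_mul_sq_mul_le {t : ℕ} (ht : 4 ≤ t) {L W ε : ℝ} (hε : 0 < ε)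
    (hL : (√6 - 2) / 2 * t ≤ L) (hL' : L ≤ (√6 - 2) / 2 * t + 1) (hW : 1 + ε ≤ ε * W) :
    ((t : ℝ) ^ 2 + 2 * L ^ 2) * W ≤ (rBound t + ε) * (t * (t + L) * W - t) := by
  have hT : (4 : ℝ) ≤ t := by exact_mod_cast ht
  have hL0 : 0 ≤ L := le_trans (mul_nonneg (by linarith [sqrt_six_mem_Ioo.1]) (by linarith)) hL
  have hW0 : 0 ≤ W := by nlinarith
  have habsorb : rBound t + ε ≤ ε * ((t + L) * W) := by
    have hC := rBound_le_two (by omega : 1 ≤ t)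
    nlinarith
  calc ((t : ℝ) ^ 2 + 2 * L ^ 2) * W ≤ rBound t * (t * (t + L)) * W := by
        gcongr; exact sq_add_two_mul_sq_le ht hL hL'
    _ ≤ (rBound t + ε) * (t * (t + L) * W - t) := by
        nlinarith [mul_le_mul_of_nonneg_left habsorb (Nat.cast_nonneg (α := ℝ) t)]

def RepresentativenessAtMost {n t : ℕ} (V : Fin n → Fin t → Bool) (C : ℝ) : Prop :=
  (∀ j, ColMajority V j) ∧ 0 < matchCount V (fun _ => true) ∧
    ∀ p, MajSupported V p → (matchCount V p : ℝ) ≤ C * matchCount V (fun _ => true)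

lemma representativenessAtMost_const_true {t : ℕ} (ht : 0 < t) {C : ℝ} (hC : 1 ≤ C) :
    RepresentativenessAtMost (fun (_ : Fin 1) (_ : Fin t) => true) C := by
  have hall : matchCount (fun (_ : Fin 1) (_ : Fin t) => true) (fun _ => true) = t := by
    simp [matchCount]
  refine ⟨fun j => by simp [ColMajority], by rwa [hall], fun p _ => ?_⟩
  have hp : matchCount (fun (_ : Fin 1) (_ : Fin t) => true) p ≤ t :=
    (card_filter_le _ _).trans (by simp)
  rw [hall]
  have : (matchCount (fun (_ : Fin 1) (_ : Fin t) => true) p : ℝ) ≤ t := by exact_mod_cast hp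
  nlinarith [(Nat.cast_nonneg t : (0 : ℝ) ≤ t)]

lemma representativenessAtMost_cyclicProfile {t ℓ w : ℕ} (ht : 4 ≤ t) {ε : ℝ} (hε : 0 < ε)
    (hℓ : (√6 - 2) / 2 * t ≤ ℓ) (hℓ' : ℓ ≤ (√6 - 2) / 2 * t + 1) (hw : 1 + ε ≤ ε * w) :
    RepresentativenessAtMost (cyclicProfile t ℓ (t * w - 1) w) (rBound t + ε) := by
  have : NeZero t := ⟨by omega⟩
  obtain ⟨hs, hs'⟩ := sqrt_six_mem_Ioo
  have hT : (4 : ℝ) ≤ t := by exact_mod_cast ht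
  have hℓt : ℓ ≤ t := by
    have : (ℓ : ℝ) ≤ t := by nlinarith
    exact_mod_cast this
  have hℓ1 : 1 ≤ ℓ := by
    have : (0 : ℝ) < ℓ := by nlinarith
    exact_mod_cast this
  have hw1 : 1 ≤ w := by
    have : (1 : ℝ) ≤ w := by nlinarith
    exact_mod_cast this
  have htw : 1 ≤ t * w := Nat.one_le_iff_ne_zero.2 (by positivity)
  have hℓw : 1 ≤ ℓ * w := Nat.one_le_iff_ne_zero.2 (by positivity)
  refine ⟨fun j => ?_, ?_, fun p hp => ?_⟩
  · rw [ColMajority, card_col_cyclicProfile hℓt]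
    omega
  · rw [matchCount_cyclicProfile_true hℓt]
    positivity
  obtain ⟨k, hk⟩ := exists_cyclicWindow_supports (by omega) hp
  have hZ := two_mul_trueCount_le_of_supports hk
  rw [trueCount_cyclicWindow hℓt] at hZ
  have hmatch := matchCount_cyclicProfile_le (a := t * w - 1) (w := w) hℓt (by omega) hZ
  have hall : (matchCount (cyclicProfile t ℓ (t * w - 1) w) (fun _ => true) : ℝ)
      = t * (t + ℓ) * w - t := by
    rw [matchCount_cyclicProfile_true hℓt]
    push_cast [Nat.cast_sub htw]
    ring
  rw [hall]
  exact le_trans (by exact_mod_cast hmatch) (sq_add_two_mul_sq_mul_le ht hε hℓ hℓ' hw)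

/-- for every t ≥ 2 and ε > 0 there is a voter matrix with all-Y column
majorities in which every majority-supported proposal attains at most
(2√6 - 4 + (2/t)(1 - √(2/3)) + ε) times the matches of the all-Y proposal. -/
theorem r_t_upper_bound (t : ℕ) (ht : 2 ≤ t) (ε : ℝ) (hε : 0 < ε) :
    ∃ n : ℕ, 1 ≤ n ∧ ∃ V : Fin n → Fin t → Bool,
      (∀ j, ColMajority V j) ∧
      0 < matchCount V (fun _ => true) ∧
      ∀ p : Fin t → Bool, MajSupported V p →
        (matchCount V p : ℝ) ≤
          (2 * Real.sqrt 6 - 4 + (2 / t) * (1 - Real.sqrt (2 / 3)) + ε) *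
            matchCount V (fun _ => true) := by
  suffices ∃ n, ∃ V : Fin n → Fin t → Bool, RepresentativenessAtMost V (rBound t + ε) by
    obtain ⟨n, V, hV⟩ := this
    exact ⟨n, one_le_of_matchCount_pos hV.2.1, V, hV⟩
  rcases le_or_gt 4 t with ht4 | ht3
  · obtain ⟨ℓ, hℓ, hℓ'⟩ : ∃ ℓ : ℕ, (√6 - 2) / 2 * t ≤ ℓ ∧ ℓ ≤ (√6 - 2) / 2 * t + 1 := by
      have : 0 ≤ (√6 - 2) / 2 * t :=
        mul_nonneg (by linarith [sqrt_six_mem_Ioo.1]) (Nat.cast_nonneg t)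
      exact ⟨_, Nat.le_ceil _, (Nat.ceil_lt_add_one this).le⟩
    obtain ⟨w, hw⟩ : ∃ w : ℕ, 1 + ε ≤ ε * w :=
      ⟨⌈(1 + ε) / ε⌉₊, (div_le_iff₀' hε).1 (Nat.le_ceil _)⟩
    exact ⟨_, _, representativenessAtMost_cyclicProfile ht4 hε hℓ hℓ' hw⟩
  · exact ⟨1, _, representativenessAtMost_const_true (by omega)
      ((one_le_rBound (by omega) (by omega)).trans (le_add_of_nonneg_right hε.le))⟩
end

section
/- Let V : Fin n → Fin t → Bool be a voter matrix (t ≥ 1) whose total number of true entries satisfies |{(i,j) : V i j = true}| > ⌊n/2⌋·t + ⌈n/2⌉·⌊(t−1)/2⌋. Then the all-Y proposal is supported by a majority of voters. (This gives the upper-bound direction of ma_t(t) = 1/2 + ⌊(t−1)/2⌋/(2t): any voter matrix whose average majority exceeds this value has majority support for the topic-wise majority proposal.) -/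
open Finset

/-- if the total number of true entries exceeds
⌊n/2⌋·t + ⌈n/2⌉·⌊(t-1)/2⌋, the all-Y proposal has majority support. -/
theorem ma_t_t_upper (n t : ℕ) (ht : 1 ≤ t) (V : Fin n → Fin t → Bool)
    (h : n / 2 * t + (n + 1) / 2 * ((t - 1) / 2) < matchCount V (fun _ => true)) :
    MajSupported V (fun _ => true) := by
  by_contra hns
  unfold MajSupported at hns
  push_neg at hns
  set S := univ.filter (fun i => Supports (V i) (fun _ => true)) with hS
  have hsle : S.card ≤ n / 2 := by omega
  have hmatch : matchCount V (fun _ => true) = ∑ i, agreeCount (V i) (fun _ => true) := by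
    unfold matchCount agreeCount
    rw [Finset.card_filter, Fintype.sum_prod_type]
    simp only [Finset.card_filter]
  have hbound : ∀ i, agreeCount (V i) (fun _ => true) ≤
      if Supports (V i) (fun _ => true) then t else (t - 1) / 2 := by
    intro i
    split_ifs with hi
    · calc agreeCount (V i) (fun _ => true) ≤ (univ : Finset (Fin t)).card :=
        Finset.card_filter_le _ _
      _ = t := by simp
    · unfold Supports at hi
      omega
  have hsum : ∑ i, agreeCount (V i) (fun _ => true) ≤
      S.card * t + (n - S.card) * ((t - 1) / 2) := by
    calc ∑ i, agreeCount (V i) (fun _ => true)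
        ≤ ∑ i, (if Supports (V i) (fun _ => true) then t else (t - 1) / 2) :=
          Finset.sum_le_sum (fun i _ => hbound i)
      _ = S.card * t + (univ.filter (fun i => ¬ Supports (V i) (fun _ => true))).card
            * ((t - 1) / 2) := by
          rw [Finset.sum_ite, Finset.sum_const, Finset.sum_const, smul_eq_mul, smul_eq_mul]
      _ = S.card * t + (n - S.card) * ((t - 1) / 2) := by
          have htot := Finset.card_filter_add_card_filter_not
            (s := (univ : Finset (Fin n))) (p := fun i => Supports (V i) (fun _ => true))
          simp only [Finset.card_univ, Fintype.card_fin] at htot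
          rw [← hS] at htot
          have hc : (univ.filter (fun i => ¬ Supports (V i) (fun _ => true))).card
              = n - S.card := by omega
          rw [hc]
  rw [hmatch] at h
  have hm : (t - 1) / 2 ≤ t := by omega
  set s := S.card
  set m := (t - 1) / 2
  have key : s * t + (n - s) * m ≤ n / 2 * t + (n + 1) / 2 * m := by
    have h1 : n - s = (n / 2 - s) + (n + 1) / 2 := by omega
    rw [h1, add_mul]
    have h2 : s * t + (n / 2 - s) * m ≤ n / 2 * t := by
      calc s * t + (n / 2 - s) * m ≤ s * t + (n / 2 - s) * t := by
            exact Nat.add_le_add_left (Nat.mul_le_mul_left _ hm) _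
        _ = n / 2 * t := by rw [← add_mul]; congr 1; omega
    omega
  omega
end

section
/- Fix t ≥ 1 and w with ⌈(t+1)/2⌉ ≤ w ≤ t. Let q_0, …, q_t be nonnegative rational numbers with q_0 + … + q_t = 1 such that for every k with w ≤ k ≤ t one has ∑_{l=0}^{t} s_{k,l}·q_l < C(t,k)/2, where s_{k,l} is the number of k-proposals supported by an l-voter. Then there exist n ≥ 1 and a voter matrix V : Fin n → Fin t → Bool such that for each l the number of voters whose row has exactly l true entries equals q_l·n, and no proposal with at least w entries true is supported by a majority of voters. -/
open Finset

/-- The number `s_{k,l}` of k-proposals supported by a (fixed, canonical) l-voter. -/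
def skl (t k l : ℕ) : ℕ :=
  ((univ : Finset (Fin t → Bool)).filter
    (fun p => trueCount p = k ∧ Supports (fun j : Fin t => decide (j.val < l)) p)).card


/-! Each l-vector is used `m l` times, where `m l · C(t,l) = q l · n`. Then a fixed k-proposal
is supported by `∑_l s_{l,k} m_l` voters, and the double-counting identity
`C(t,k) s_{l,k} = C(t,l) s_{k,l}` turns this into `n / C(t,k) · ∑_l s_{k,l} q_l`, which the LP
constraint bounds by `n / 2`. -/

lemma agreeCount_comm {t : ℕ} (v p : Fin t → Bool) : agreeCount v p = agreeCount p v := by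
  simp only [agreeCount, eq_comm]

lemma supports_comm {t : ℕ} (v p : Fin t → Bool) : Supports v p ↔ Supports p v := by
  rw [Supports, Supports, agreeCount_comm]

section Permutation

variable {t : ℕ} (σ : Equiv.Perm (Fin t))

lemma trueCount_comp_perm (p : Fin t → Bool) : trueCount (p ∘ σ) = trueCount p :=
  card_equiv σ (by simp)

lemma supports_comp_perm (v p : Fin t → Bool) : Supports (v ∘ σ) (p ∘ σ) ↔ Supports v p := by
  rw [Supports, Supports, agreeCount, agreeCount, card_equiv σ (t := univ.filter fun j => v j = p j)
    (by simp)]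

end Permutation

lemma trueCount_decide_val_lt {t l : ℕ} (hl : l ≤ t) :
    trueCount (fun j : Fin t => decide (j.val < l)) = l := by
  simp only [trueCount, decide_eq_true_eq]
  rw [Fin.card_filter_val_lt, min_eq_right hl]

lemma exists_perm_eq_comp_of_trueCount_eq {t : ℕ} {p p' : Fin t → Bool}
    (h : trueCount p = trueCount p') : ∃ σ : Equiv.Perm (Fin t), p = p' ∘ σ := by
  have hcard : Fintype.card {j // p j = true} = Fintype.card {j // p' j = true} := by
    simpa [Fintype.card_subtype, trueCount] using h
  let e := Fintype.equivOfCardEq hcard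
  exact ⟨e.extendSubtype, funext fun j => Bool.eq_iff_iff.2
    ⟨e.extendSubtype_mem j, fun h => by_contra fun hj => e.extendSubtype_not_mem j hj h⟩⟩

lemma card_trueCount_eq (t k : ℕ) :
    #{p : Fin t → Bool | trueCount p = k} = t.choose k := by
  have hpow := card_powersetCard k (univ : Finset (Fin t))
  rw [card_univ, Fintype.card_fin] at hpow
  rw [← hpow]
  refine card_nbij' (fun p => ({j | p j = true} : Finset (Fin t))) (fun s j => decide (j ∈ s))
    ?_ ?_ ?_ ?_
  · intro p hp
    rw [mem_coe, mem_filter] at hp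
    simpa [trueCount] using hp.2
  · intro s hs
    rw [mem_coe, mem_powersetCard] at hs
    rw [mem_coe, mem_filter]
    simpa [trueCount] using hs.2
  · intro p _
    funext j
    simp
  · intro s _
    ext j
    simp

lemma card_supported_eq_skl {t k l : ℕ} {u : Fin t → Bool} (hu : trueCount u = l) :
    #{p | trueCount p = k ∧ Supports u p} = skl t k l := by
  obtain ⟨σ, hσ⟩ := exists_perm_eq_comp_of_trueCount_eq (p := fun j : Fin t => decide (j.val < l))
    (p' := u) (by rw [trueCount_decide_val_lt (hu ▸ trueCount_le u), hu])
  refine card_nbij' (fun p => p ∘ σ) (fun p => p ∘ σ.symm) ?_ ?_ ?_ ?_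
  · intro p hp
    simp only [mem_coe, mem_filter, mem_univ, true_and] at hp ⊢
    rw [trueCount_comp_perm, hσ, supports_comp_perm]
    exact hp
  · intro p hp
    simp only [mem_coe, mem_filter, mem_univ, true_and] at hp ⊢
    rw [trueCount_comp_perm, ← supports_comp_perm σ, Function.comp_assoc, Equiv.symm_comp_self,
      Function.comp_id, ← hσ]
    exact hp
  all_goals
    intro p _
    funext j
    simp

lemma choose_mul_skl_comm (t k l : ℕ) : t.choose k * skl t l k = t.choose l * skl t k l := by
  rw [← card_trueCount_eq t k, ← card_trueCount_eq t l]
  refine card_mul_eq_card_mul (fun p v => Supports v p) (fun p hp => ?_) (fun v hv => ?_)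
  · rw [mem_filter] at hp
    rw [bipartiteAbove, filter_filter, ← card_supported_eq_skl hp.2]
    simp only [supports_comm _ p]
  · rw [mem_filter] at hv
    rw [bipartiteBelow, filter_filter, ← card_supported_eq_skl hv.2]

lemma choose_mul_sum_skl (t k : ℕ) (m : ℕ → ℕ) :
    t.choose k * ∑ l ∈ range (t + 1), skl t l k * m l
      = ∑ l ∈ range (t + 1), skl t k l * (t.choose l * m l) := by
  rw [mul_sum]
  refine sum_congr rfl fun l _ => ?_
  rw [← mul_assoc, ← mul_assoc, choose_mul_skl_comm]
  ring

lemma sum_comp_trueCount {t : ℕ} (s : Finset (Fin t → Bool)) (f : ℕ → ℕ) :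
    ∑ v ∈ s, f (trueCount v) = ∑ l ∈ range (t + 1), #{v ∈ s | trueCount v = l} * f l := by
  rw [← sum_fiberwise_of_maps_to (g := trueCount)
    (fun v _ => mem_range.2 (Nat.lt_succ_of_le (trueCount_le v)))]
  exact sum_congr rfl fun l _ => sum_const_nat fun v hv => by rw [(mem_filter.1 hv).2]

lemma exists_fin_card_filter_eq_sum {α : Type*} [Fintype α] (c : α → ℕ) {n : ℕ}
    (hn : ∑ a, c a = n) :
    ∃ V : Fin n → α, ∀ (Q : α → Prop) [DecidablePred Q], #{i | Q (V i)} = ∑ a with Q a, c a := by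
  classical
  have hcard : Fintype.card (Σ a, Fin (c a)) = n := by simp [hn]
  let e := Fintype.equivFinOfCardEq hcard
  refine ⟨fun i => (e.symm i).1, fun Q _ => ?_⟩
  rw [card_equiv (t := univ.filter fun x : Σ a, Fin (c a) => Q x.1) e.symm (by simp)]
  have : univ.filter (fun x : Σ a, Fin (c a) => Q x.1) = (univ.filter Q).sigma fun _ => univ := by
    ext ⟨a, i⟩
    simp
  rw [this, card_sigma]
  simp

lemma exists_voterMatrix_of_multiplicity (t : ℕ) (m : ℕ → ℕ) :
    ∃ V : Fin (∑ l ∈ range (t + 1), t.choose l * m l) → Fin t → Bool,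
      (∀ l, #{i | trueCount (V i) = l} = t.choose l * m l) ∧
      ∀ p, #{i | Supports (V i) p} = ∑ l ∈ range (t + 1), skl t l (trueCount p) * m l := by
  obtain ⟨V, hV⟩ := exists_fin_card_filter_eq_sum (fun v : Fin t → Bool => m (trueCount v))
    (n := ∑ l ∈ range (t + 1), t.choose l * m l)
    (by rw [sum_comp_trueCount]; simp only [card_trueCount_eq])
  refine ⟨V, fun l => ?_, fun p => ?_⟩
  · rw [hV (fun v => trueCount v = l), sum_const_nat fun v hv => by rw [(mem_filter.1 hv).2],
      card_trueCount_eq]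
  · rw [hV (fun v => Supports v p), sum_comp_trueCount]
    refine sum_congr rfl fun l _ => ?_
    rw [filter_filter, ← card_supported_eq_skl (k := l) (rfl : trueCount p = _)]
    simp only [supports_comm _ p, and_comm]

lemma exists_pos_nat_mul_eq_natCast {ι : Type*} (s : Finset ι) (r : ι → ℚ)
    (hr : ∀ i ∈ s, 0 ≤ r i) : ∃ D : ℕ, 0 < D ∧ ∃ m : ι → ℕ, ∀ i ∈ s, (m i : ℚ) = r i * D := by
  set D := ∏ i ∈ s, (r i).den
  refine ⟨D, prod_pos fun i _ => (r i).den_pos, fun i => (r i).num.toNat * (D / (r i).den),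
    fun i hi => ?_⟩
  have hD : ((r i).den : ℚ) * ((D / (r i).den : ℕ) : ℚ) = D := by
    rw [← Nat.cast_mul, Nat.mul_div_cancel' (dvd_prod_of_mem (fun i => (r i).den) hi)]
  have hnum : (((r i).num.toNat : ℕ) : ℚ) = (r i).num := by
    exact_mod_cast Int.toNat_of_nonneg (Rat.num_nonneg.2 (hr i hi))
  rw [Nat.cast_mul, hnum, ← hD, ← mul_assoc, Rat.mul_den_eq_num]

theorem lp_solution_realizable_general (t w : ℕ)
    (q : ℕ → ℚ) (hq0 : ∀ l, 0 ≤ q l) (hq1 : ∑ l ∈ Finset.range (t + 1), q l = 1)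
    (hlp : ∀ k, w ≤ k → k ≤ t →
      ∑ l ∈ Finset.range (t + 1), (skl t k l : ℚ) * q l < (Nat.choose t k : ℚ) / 2) :
    ∃ n : ℕ, 1 ≤ n ∧ ∃ V : Fin n → Fin t → Bool,
      (∀ l, l ≤ t →
        (((univ : Finset (Fin n)).filter (fun i => trueCount (V i) = l)).card : ℚ)
          = q l * n) ∧
      ∀ p : Fin t → Bool, w ≤ trueCount p → ¬ MajSupported V p := by
  obtain ⟨D, hD, m, hm⟩ := exists_pos_nat_mul_eq_natCast (range (t + 1))
    (fun l => q l / t.choose l) fun l _ => div_nonneg (hq0 l) (Nat.cast_nonneg _)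
  have hmq : ∀ l ∈ range (t + 1), ((t.choose l * m l : ℕ) : ℚ) = q l * D := by
    intro l hl
    have : (t.choose l : ℚ) ≠ 0 :=
      Nat.cast_ne_zero.2 (Nat.choose_pos (Nat.lt_succ_iff.1 (mem_range.1 hl))).ne'
    rw [Nat.cast_mul, hm l hl]
    field_simp
  have hn : ∑ l ∈ range (t + 1), t.choose l * m l = D := Nat.cast_injective (R := ℚ) <| by
    rw [Nat.cast_sum, sum_congr rfl hmq, ← sum_mul, hq1, one_mul]
  obtain ⟨V, hVl, hVp⟩ := exists_voterMatrix_of_multiplicity t m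
  refine ⟨_, hn ▸ hD, V, fun l hl => ?_, fun p hp hmaj => ?_⟩
  · rw [hVl, hn]
    exact hmq l (mem_range.2 (Nat.lt_succ_of_le hl))
  · set k := trueCount p
    have hC : (0 : ℚ) < t.choose k := Nat.cast_pos.2 (Nat.choose_pos (trueCount_le p))
    have hsupp : (t.choose k : ℚ) * #{i | Supports (V i) p}
        = D * ∑ l ∈ range (t + 1), skl t k l * q l := by
      rw [hVp, ← Nat.cast_mul, choose_mul_sum_skl, Nat.cast_sum, mul_sum]
      refine sum_congr rfl fun l hl => ?_
      rw [Nat.cast_mul, hmq l hl]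
      ring
    have hmajD : (D : ℚ) ≤ 2 * #{i | Supports (V i) p} := by
      rw [← hn]
      exact_mod_cast hmaj
    have hDq : (0 : ℚ) < D := Nat.cast_pos.2 hD
    linarith [mul_lt_mul_of_pos_left (hlp k hp (trueCount_le p)) hDq,
      mul_le_mul_of_nonneg_left hmajD hC.le]

/-- a rational feasible point of the LP yields a voter matrix with the
prescribed fractions of l-voters in which no proposal with at least w true entries is
majority supported. -/
theorem lp_solution_realizable (t w : ℕ) (ht : 1 ≤ t)
    (hw1 : (t + 2) / 2 ≤ w) (hw2 : w ≤ t)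
    (q : ℕ → ℚ) (hq0 : ∀ l, 0 ≤ q l) (hq1 : ∑ l ∈ Finset.range (t + 1), q l = 1)
    (hlp : ∀ k, w ≤ k → k ≤ t →
      ∑ l ∈ Finset.range (t + 1), (skl t k l : ℚ) * q l < (Nat.choose t k : ℚ) / 2) :
    ∃ n : ℕ, 1 ≤ n ∧ ∃ V : Fin n → Fin t → Bool,
      (∀ l, l ≤ t →
        (((univ : Finset (Fin n)).filter (fun i => trueCount (V i) = l)).card : ℚ)
          = q l * n) ∧
      ∀ p : Fin t → Bool, w ≤ trueCount p → ¬ MajSupported V p :=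
  lp_solution_realizable_general t w q hq0 hq1 hlp
end
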